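/- Let q ≡ 3 mod 4 and k ≡ 2 mod 4. For any subset W of F_q^k, the number of ordered pairs (x,y) ∈ W × W with (x_1-y_1)² + ... + (x_k-y_k)² = 0 is at most |W|²/q + q^{(k-2)/2}|W|. -/

import Mathlib

open Finset AddChar

/-! Auxiliary material for the zero-distance pair count bound. -/

/-- The quadratic character of `F` with values in `ℂ`. -/
noncomputable def qcharC (F : Type*) [Field F] [Fintype F] [DecidableEq F] : MulChar F ℂ :=
  (quadraticChar F).ringHomComp (Int.castRingHom ℂ)

section Aux

variable {F : Type*} [Field F] [Fintype F] [DecidableEq F]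

lemma AddChar.map_sum' {M : Type*} [CommMonoid M] (ψ : AddChar F M) {ι : Type*}
    (s : Finset ι) (f : ι → F) : ψ (∑ i ∈ s, f i) = ∏ i ∈ s, ψ (f i) := by
  classical
  induction s using Finset.induction with
  | empty => simp
  | insert a s ha ih =>
      rw [Finset.sum_insert ha, Finset.prod_insert ha, map_add_eq_mul, ih]

lemma ringChar_ne_two_of_card (hq : Fintype.card F % 4 = 3) : ringChar F ≠ 2 := by
  intro h
  have := FiniteField.even_card_of_char_two h
  omega

lemma qcharC_ne_one (hF2 : ringChar F ≠ 2) : qcharC F ≠ 1 :=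
  (MulChar.ringHomComp_ne_one_iff (Int.cast_injective)).mpr (quadraticChar_ne_one hF2)

lemma qcharC_quadratic : (qcharC F).IsQuadratic :=
  (quadraticChar_isQuadratic F).comp _

lemma qcharC_sq {t : F} (ht : t ≠ 0) : qcharC F t * qcharC F t = 1 := by
  have := quadraticChar_sq_one ht
  simp only [qcharC, MulChar.ringHomComp_apply, eq_intCast, ← pow_two]
  exact_mod_cast this

lemma gaussC_sq (hF2 : ringChar F ≠ 2) (hq : Fintype.card F % 4 = 3)
    {ψ : AddChar F ℂ} (hψ : ψ.IsPrimitive) :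
    gaussSum (qcharC F) ψ ^ 2 = -(Fintype.card F : ℂ) := by
  rw [gaussSum_sq (qcharC_ne_one hF2) qcharC_quadratic hψ]
  have : quadraticChar F (-1) = -1 := by
    rw [quadraticChar_neg_one hF2, ZMod.χ₄_nat_three_mod_four hq]
  simp [qcharC, this]

lemma ortho_F {ψ : AddChar F ℂ} (hψ : ψ.IsPrimitive) (u : F) :
    ∑ t : F, ψ (t * u) = if u = 0 then (Fintype.card F : ℂ) else 0 := by
  rw [AddChar.sum_mulShift u hψ]; split <;> simp

lemma ortho_V {ψ : AddChar F ℂ} (hψ : ψ.IsPrimitive) {k : ℕ} (w : Fin k → F) :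
    ∑ m : Fin k → F, ψ (∑ i, m i * w i)
      = if w = 0 then ((Fintype.card F : ℂ)) ^ k else 0 := by
  simp_rw [fun m : Fin k → F => AddChar.map_sum' ψ univ (fun i => m i * w i)]
  have h2 : ∑ m : Fin k → F, ∏ i, ψ (m i * w i)
      = ∑ m ∈ Fintype.piFinset (fun _ : Fin k => (univ : Finset F)),
          ∏ i, ψ (m i * w i) := by
    rw [Fintype.piFinset_univ]
  rw [h2, Finset.sum_prod_piFinset univ (fun i t => ψ (t * w i))]
  simp_rw [ortho_F hψ]
  by_cases hw : w = 0
  · simp [hw]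
  · simp only [hw, if_false]
    obtain ⟨i, hi⟩ : ∃ i, w i ≠ 0 := by
      by_contra h; push_neg at h; exact hw (funext h)
    exact Finset.prod_eq_zero (Finset.mem_univ i) (by simp [hi])

lemma sum_psi_sq (hF2 : ringChar F ≠ 2) {ψ : AddChar F ℂ} (hψ : ψ.IsPrimitive)
    {t : F} (ht : t ≠ 0) :
    ∑ v : F, ψ (t * v ^ 2) = qcharC F t * gaussSum (qcharC F) ψ := by
  classical
  have fib : ∑ v : F, ψ (t * v ^ 2)
      = ∑ s : F, ∑ v ∈ univ.filter (fun v : F => v ^ 2 = s), ψ (t * v ^ 2) :=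
    (Finset.sum_fiberwise univ (fun v : F => v ^ 2) (fun v => ψ (t * v ^ 2))).symm
  have inner : ∀ s : F, ∑ v ∈ univ.filter (fun v : F => v ^ 2 = s), ψ (t * v ^ 2)
      = (1 + qcharC F s) * ψ (t * s) := by
    intro s
    rw [Finset.sum_congr rfl (fun v hv => by
      rw [(Finset.mem_filter.mp hv).2]), Finset.sum_const, nsmul_eq_mul]
    congr 1
    have hcard := quadraticChar_card_sqrts hF2 s
    have hset : ({x : F | x ^ 2 = s}.toFinset) = univ.filter (fun v : F => v ^ 2 = s) := by
      ext x; simp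
    rw [hset] at hcard
    have := congrArg (fun n : ℤ => (n : ℂ)) hcard
    push_cast at this ⊢
    rw [this]; simp [qcharC]; ring
  rw [fib]
  simp_rw [inner, add_mul, one_mul, Finset.sum_add_distrib]
  have h0 : ∑ s : F, ψ (t * s) = 0 := by
    have := AddChar.sum_mulShift t hψ
    simp only [ht, if_false, Nat.cast_zero] at this
    rw [← this]
    exact Finset.sum_congr rfl fun s _ => by rw [mul_comm]
  rw [h0, zero_add]
  have hg : ∑ s : F, qcharC F s * ψ (t * s) = gaussSum (qcharC F) (AddChar.mulShift ψ t) := by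
    unfold gaussSum
    exact Finset.sum_congr rfl fun s _ => by rw [AddChar.mulShift_apply]
  rw [hg]
  have hu : qcharC F t * gaussSum (qcharC F) (AddChar.mulShift ψ (Units.mk0 t ht))
      = gaussSum (qcharC F) ψ :=
    gaussSum_mulShift (qcharC F) ψ (Units.mk0 t ht)
  have he : gaussSum (qcharC F) (AddChar.mulShift ψ t)
      = gaussSum (qcharC F) (AddChar.mulShift ψ (Units.mk0 t ht)) := rfl
  rw [he, ← hu, ← mul_assoc, qcharC_sq ht, one_mul]

lemma complete_sq (hF2 : ringChar F ≠ 2) {ψ : AddChar F ℂ} (hψ : ψ.IsPrimitive)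
    {t : F} (ht : t ≠ 0) (c : F) :
    ∑ u : F, ψ (t * u ^ 2 + c * u)
      = qcharC F t * gaussSum (qcharC F) ψ * ψ (-(c ^ 2) / (4 * t)) := by
  have h2 : (2 : F) ≠ 0 := Ring.two_ne_zero hF2
  have key : ∀ v : F, t * (v - c / (2 * t)) ^ 2 + c * (v - c / (2 * t))
      = t * v ^ 2 + (-(c ^ 2) / (4 * t)) := by
    have h4 : (4 : F) ≠ 0 := by
      have h42 : (4 : F) = 2 * 2 := by norm_num
      rw [h42]; exact mul_ne_zero h2 h2
    intro v; field_simp; ring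
  calc ∑ u : F, ψ (t * u ^ 2 + c * u)
      = ∑ v : F, ψ (t * (v - c / (2 * t)) ^ 2 + c * (v - c / (2 * t))) :=
        (Fintype.sum_equiv (Equiv.subRight (c / (2 * t)))
          (fun v => ψ (t * (v - c / (2 * t)) ^ 2 + c * (v - c / (2 * t))))
          (fun u => ψ (t * u ^ 2 + c * u)) (fun v => rfl)).symm
    _ = ∑ v : F, ψ (t * v ^ 2) * ψ (-(c ^ 2) / (4 * t)) := by
        refine Finset.sum_congr rfl fun v _ => ?_
        rw [key v, map_add_eq_mul]
    _ = qcharC F t * gaussSum (qcharC F) ψ * ψ (-(c ^ 2) / (4 * t)) := by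
        rw [← Finset.sum_mul, sum_psi_sq hF2 hψ ht]

/-- Product over coordinates: the Gauss sum for the quadratic form in `k` variables. -/
lemma prodcoord (hF2 : ringChar F ≠ 2) {ψ : AddChar F ℂ} (hψ : ψ.IsPrimitive)
    {t : F} (ht : t ≠ 0) {k : ℕ} (m : Fin k → F) :
    ∑ z : Fin k → F, ψ (t * ∑ i, z i ^ 2 + ∑ i, m i * z i)
      = (qcharC F t * gaussSum (qcharC F) ψ) ^ k * ψ (-(∑ i, m i ^ 2) / (4 * t)) := by
  have h1 : ∀ z : Fin k → F, t * ∑ i, z i ^ 2 + ∑ i, m i * z i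
      = ∑ i, (t * z i ^ 2 + m i * z i) := by
    intro z; rw [Finset.mul_sum, ← Finset.sum_add_distrib]
  simp_rw [h1]
  simp_rw [fun z : Fin k → F => AddChar.map_sum' ψ univ (fun i => t * z i ^ 2 + m i * z i)]
  have h2 : ∑ z : Fin k → F, ∏ i, ψ (t * z i ^ 2 + m i * z i)
      = ∑ z ∈ Fintype.piFinset (fun _ : Fin k => (univ : Finset F)),
          ∏ i, ψ (t * z i ^ 2 + m i * z i) := by
    rw [Fintype.piFinset_univ]
  rw [h2, Finset.sum_prod_piFinset univ (fun i u => ψ (t * u ^ 2 + m i * u))]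
  have h3 : ∀ i : Fin k, ∑ u : F, ψ (t * u ^ 2 + m i * u)
      = qcharC F t * gaussSum (qcharC F) ψ * ψ (-(m i ^ 2) / (4 * t)) :=
    fun i => complete_sq hF2 hψ ht (m i)
  simp_rw [h3]
  rw [Finset.prod_mul_distrib, Finset.prod_const, Finset.card_univ, Fintype.card_fin]
  congr 1
  rw [← AddChar.map_sum' ψ univ (fun i => -(m i ^ 2) / (4 * t))]
  congr 1
  rw [← Finset.sum_div, ← Finset.sum_neg_distrib]

/-- Single pair Fourier inversion. -/
lemma single_pair {ψ : AddChar F ℂ} (hψ : ψ.IsPrimitive) {k : ℕ} (t : F) (d : Fin k → F) :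
    (Fintype.card F : ℂ) ^ k * ψ (t * ∑ i, d i ^ 2)
      = ∑ m : Fin k → F,
          (∑ z : Fin k → F, ψ (t * ∑ i, z i ^ 2 + ∑ i, m i * z i)) * ψ (-∑ i, m i * d i) := by
  have step : ∀ m z : Fin k → F,
      ψ (t * ∑ i, z i ^ 2 + ∑ i, m i * z i) * ψ (-∑ i, m i * d i)
        = ψ (t * ∑ i, z i ^ 2) * ψ (∑ i, m i * (z - d) i) := by
    intro m z
    rw [map_add_eq_mul, mul_assoc, ← map_add_eq_mul, ← sub_eq_add_neg]
    congr 2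
    simp only [Pi.sub_apply, mul_sub]
    rw [Finset.sum_sub_distrib]
  symm
  calc ∑ m : Fin k → F,
          (∑ z : Fin k → F, ψ (t * ∑ i, z i ^ 2 + ∑ i, m i * z i)) * ψ (-∑ i, m i * d i)
      = ∑ m : Fin k → F, ∑ z : Fin k → F,
          ψ (t * ∑ i, z i ^ 2) * ψ (∑ i, m i * (z - d) i) := by
        refine Finset.sum_congr rfl fun m _ => ?_
        rw [Finset.sum_mul]
        exact Finset.sum_congr rfl fun z _ => step m z
    _ = ∑ z : Fin k → F, ψ (t * ∑ i, z i ^ 2)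
          * ∑ m : Fin k → F, ψ (∑ i, m i * (z - d) i) := by
        rw [Finset.sum_comm]
        exact Finset.sum_congr rfl fun z _ => (Finset.mul_sum _ _ _).symm
    _ = ∑ z : Fin k → F, if z = d then ψ (t * ∑ i, z i ^ 2) * (Fintype.card F : ℂ) ^ k
          else 0 := by
        refine Finset.sum_congr rfl fun z _ => ?_
        rw [ortho_V hψ (z - d)]
        by_cases hz : z = d
        · simp [hz]
        · have : z - d ≠ 0 := fun h => hz (sub_eq_zero.mp h)
          simp [hz, this]
    _ = (Fintype.card F : ℂ) ^ k * ψ (t * ∑ i, d i ^ 2) := by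
        rw [Finset.sum_ite_eq' univ d
          (fun z => ψ (t * ∑ i, z i ^ 2) * (Fintype.card F : ℂ) ^ k)]
        simp [mul_comm]

end Aux
section Aux2
variable {F : Type*} [Field F] [Fintype F] [DecidableEq F]

lemma psi_ne_one {ψ : AddChar F ℂ} (hψ : ψ.IsPrimitive) : ψ ≠ 1 := by
  have := hψ (one_ne_zero (α := F))
  rwa [AddChar.mulShift_one] at this

lemma gauss_pow (hF2 : ringChar F ≠ 2) (hq : Fintype.card F % 4 = 3)
    {ψ : AddChar F ℂ} (hψ : ψ.IsPrimitive) {k : ℕ} (hk4 : k % 4 = 2) {t : F} (ht : t ≠ 0) :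
    (qcharC F t * gaussSum (qcharC F) ψ) ^ k = -(Fintype.card F : ℂ) ^ (k / 2) := by
  rw [mul_pow]
  obtain ⟨j, hj⟩ : ∃ j, k = 2 * j := ⟨k / 2, by omega⟩
  have hj2 : k / 2 = j := by omega
  have h1 : qcharC F t ^ k = 1 := by
    rw [hj, pow_mul, pow_two, qcharC_sq ht, one_pow]
  have h2 : gaussSum (qcharC F) ψ ^ k = (-(Fintype.card F : ℂ)) ^ j := by
    rw [hj, pow_mul, gaussC_sq hF2 hq hψ]
  rw [h1, one_mul, h2, hj2]
  have hodd : Odd j := Nat.odd_iff.mpr (by omega)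
  rw [hodd.neg_pow]

lemma T_sum (hF2 : ringChar F ≠ 2) {ψ : AddChar F ℂ} (hψ : ψ.IsPrimitive) (c : F) :
    ∑ t ∈ (univ : Finset F).erase 0, ψ (-c / (4 * t))
      = if c = 0 then (Fintype.card F : ℂ) - 1 else -1 := by
  have h2 : (2 : F) ≠ 0 := Ring.two_ne_zero hF2
  have h4 : (4 : F) ≠ 0 := by
    have h42 : (4 : F) = 2 * 2 := by norm_num
    rw [h42]; exact mul_ne_zero h2 h2
  by_cases hc : c = 0
  · simp only [hc, if_true, neg_zero, zero_div, AddChar.map_zero_eq_one,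
      Finset.sum_const, nsmul_eq_mul, mul_one]
    rw [Finset.card_erase_of_mem (Finset.mem_univ _), Finset.card_univ]
    push_cast [Nat.cast_sub (Nat.one_le_iff_ne_zero.mpr Fintype.card_ne_zero)]
    ring
  · simp only [hc, if_false]
    have hbij : ∑ t ∈ (univ : Finset F).erase 0, ψ (-c / (4 * t))
        = ∑ s ∈ (univ : Finset F).erase 0, ψ s := by
      refine Finset.sum_nbij' (fun t => -c / (4 * t)) (fun s => -c / (4 * s))
        ?_ ?_ ?_ ?_ ?_
      · intro a ha
        simp only [Finset.mem_erase, Finset.mem_univ, and_true] at ha ⊢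
        exact div_ne_zero (neg_ne_zero.mpr hc) (mul_ne_zero h4 ha)
      · intro a ha
        simp only [Finset.mem_erase, Finset.mem_univ, and_true] at ha ⊢
        exact div_ne_zero (neg_ne_zero.mpr hc) (mul_ne_zero h4 ha)
      · intro a ha
        simp only [Finset.mem_erase, Finset.mem_univ, and_true] at ha
        field_simp
      · intro a ha
        simp only [Finset.mem_erase, Finset.mem_univ, and_true] at ha
        field_simp
      · intro a _; rfl
    rw [hbij, Finset.sum_erase_eq_sub (Finset.mem_univ (0 : F))]
    rw [sum_eq_zero_of_ne_one (psi_ne_one hψ), AddChar.map_zero_eq_one]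
    ring

lemma conjB {ψ : AddChar F ℂ} {k : ℕ} (W : Finset (Fin k → F)) (m : Fin k → F) :
    (starRingEnd ℂ) (∑ x ∈ W, ψ (∑ i, m i * x i)) = ∑ x ∈ W, ψ (-∑ i, m i * x i) := by
  rw [map_sum]
  refine Finset.sum_congr rfl fun x _ => ?_
  have hR : 0 < ringChar F :=
    Nat.pos_of_ne_zero (CharP.ringChar_ne_zero_of_finite F)
  rw [AddChar.starComp_apply hR, AddChar.inv_apply]

lemma parseval {ψ : AddChar F ℂ} (hψ : ψ.IsPrimitive) {k : ℕ} (W : Finset (Fin k → F)) :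
    ∑ m : Fin k → F, (∑ x ∈ W, ψ (∑ i, m i * x i)) * (∑ x ∈ W, ψ (-∑ i, m i * x i))
      = (Fintype.card F : ℂ) ^ k * W.card := by
  have step : ∀ (m : Fin k → F) (x y : Fin k → F),
      ψ (∑ i, m i * x i) * ψ (-∑ i, m i * y i) = ψ (∑ i, m i * (x - y) i) := by
    intro m x y
    rw [← map_add_eq_mul, ← sub_eq_add_neg]
    congr 1
    simp only [Pi.sub_apply, mul_sub]
    rw [Finset.sum_sub_distrib]
  calc ∑ m : Fin k → F, (∑ x ∈ W, ψ (∑ i, m i * x i)) * (∑ x ∈ W, ψ (-∑ i, m i * x i))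
      = ∑ m : Fin k → F, ∑ x ∈ W, ∑ y ∈ W, ψ (∑ i, m i * (x - y) i) := by
        refine Finset.sum_congr rfl fun m _ => ?_
        rw [Finset.sum_mul_sum]
        exact Finset.sum_congr rfl fun x _ => Finset.sum_congr rfl fun y _ => step m x y
    _ = ∑ x ∈ W, ∑ y ∈ W, ∑ m : Fin k → F, ψ (∑ i, m i * (x - y) i) := by
        rw [Finset.sum_comm]
        refine Finset.sum_congr rfl fun x _ => ?_
        rw [Finset.sum_comm]
    _ = ∑ x ∈ W, ∑ y ∈ W, if x = y then (Fintype.card F : ℂ) ^ k else 0 := by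
        refine Finset.sum_congr rfl fun x _ => Finset.sum_congr rfl fun y _ => ?_
        rw [ortho_V hψ (x - y)]
        by_cases hxy : x = y
        · simp [hxy]
        · have : x - y ≠ 0 := fun h => hxy (sub_eq_zero.mp h)
          simp [hxy, this]
    _ = (Fintype.card F : ℂ) ^ k * W.card := by
        have hin : ∀ x ∈ W, (∑ y ∈ W, if x = y then (Fintype.card F : ℂ) ^ k else 0)
            = (Fintype.card F : ℂ) ^ k := by
          intro x hx
          rw [Finset.sum_ite_eq W x (fun _ => (Fintype.card F : ℂ) ^ k)]
          simp [hx]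
        rw [Finset.sum_congr rfl hin, Finset.sum_const, nsmul_eq_mul, mul_comm]

end Aux2
open Finset AddChar in
/-- For `q ≡ 3 mod 4`, `k ≡ 2 mod 4`, and any `W ⊆ F_q^k`, the number of ordered pairs
`(x, y) ∈ W × W` with `‖x - y‖ = (x₁-y₁)² + ⋯ + (x_k-y_k)² = 0` is at most
`|W|²/q + q^{(k-2)/2}|W|`. -/
theorem zero_distance_pair_count_bound {F : Type*} [Field F] [Fintype F] [DecidableEq F]
    (hq : Fintype.card F % 4 = 3) (k : ℕ) (hk4 : k % 4 = 2)
    (W : Finset (Fin k → F)) :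
    (((W ×ˢ W).filter (fun p : (Fin k → F) × (Fin k → F) =>
        ∑ i, (p.1 i - p.2 i) ^ 2 = 0)).card : ℝ)
      ≤ (W.card : ℝ) ^ 2 / (Fintype.card F : ℝ)
        + (Fintype.card F : ℝ) ^ ((k - 2) / 2) * W.card := by
  have hF2 : ringChar F ≠ 2 := ringChar_ne_two_of_card hq
  set ψ : AddChar F ℂ := FiniteField.primitiveChar_to_Complex F with hψdef
  have hψ : ψ.IsPrimitive := FiniteField.primitiveChar_to_Complex_isPrimitive F
  set q : ℕ := Fintype.card F with hqdef
  have hq3 : 3 ≤ q := by omega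
  have hqpos : (0 : ℝ) < (q : ℝ) := by
    have : 0 < q := by omega
    exact_mod_cast this
  set N : ℕ := ((W ×ˢ W).filter (fun p : (Fin k → F) × (Fin k → F) =>
      ∑ i, (p.1 i - p.2 i) ^ 2 = 0)).card with hN
  set S : F → ℂ := fun t => ∑ p ∈ W ×ˢ W, ψ (t * ∑ i, (p.1 i - p.2 i) ^ 2) with hSdef
  set B : (Fin k → F) → ℂ := fun m => ∑ x ∈ W, ψ (∑ i, m i * x i) with hBdef
  set Bc : (Fin k → F) → ℂ := fun m => ∑ x ∈ W, ψ (-∑ i, m i * x i) with hBcdef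
  -- Step A: total sum over t
  have hA : ∑ t : F, S t = (N : ℂ) * q := by
    calc ∑ t : F, S t
        = ∑ p ∈ W ×ˢ W, ∑ t : F, ψ (t * ∑ i, (p.1 i - p.2 i) ^ 2) := Finset.sum_comm
      _ = ∑ p ∈ W ×ˢ W, if (∑ i, (p.1 i - p.2 i) ^ 2) = 0 then (q : ℂ) else 0 :=
          Finset.sum_congr rfl fun p _ => ortho_F hψ _
      _ = ∑ p ∈ (W ×ˢ W).filter (fun p : (Fin k → F) × (Fin k → F) =>
            ∑ i, (p.1 i - p.2 i) ^ 2 = 0), (q : ℂ) := (Finset.sum_filter _ _).symm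
      _ = (N : ℂ) * q := by rw [Finset.sum_const, nsmul_eq_mul, hN]
  -- Step B: t = 0 term
  have hB0 : S 0 = (W.card : ℂ) ^ 2 := by
    simp only [hSdef, zero_mul, AddChar.map_zero_eq_one, Finset.sum_const, nsmul_eq_mul,
      mul_one, Finset.card_product]
    push_cast
    ring
  -- Step C: Fourier expansion for t ≠ 0
  have hC : ∀ t ∈ (univ : Finset F).erase 0, (q : ℂ) ^ k * S t
      = ∑ m : Fin k → F, -(q : ℂ) ^ (k / 2) * ψ (-(∑ i, m i ^ 2) / (4 * t))
          * (Bc m * B m) := by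
    intro t ht'
    have ht : t ≠ 0 := (Finset.mem_erase.mp ht').1
    calc (q : ℂ) ^ k * S t
        = ∑ p ∈ W ×ˢ W, (q : ℂ) ^ k * ψ (t * ∑ i, (p.1 i - p.2 i) ^ 2) := by
          rw [hSdef, Finset.mul_sum]
      _ = ∑ p ∈ W ×ˢ W, ∑ m : Fin k → F,
            (∑ z : Fin k → F, ψ (t * ∑ i, z i ^ 2 + ∑ i, m i * z i))
              * ψ (-∑ i, m i * (p.1 i - p.2 i)) := by
          refine Finset.sum_congr rfl fun p _ => ?_
          exact single_pair hψ t (p.1 - p.2)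
      _ = ∑ m : Fin k → F, (∑ z : Fin k → F, ψ (t * ∑ i, z i ^ 2 + ∑ i, m i * z i))
            * ∑ p ∈ W ×ˢ W, ψ (-∑ i, m i * (p.1 i - p.2 i)) := by
          rw [Finset.sum_comm]
          exact Finset.sum_congr rfl fun m _ => (Finset.mul_sum _ _ _).symm
      _ = ∑ m : Fin k → F, -(q : ℂ) ^ (k / 2) * ψ (-(∑ i, m i ^ 2) / (4 * t))
            * (Bc m * B m) := by
          refine Finset.sum_congr rfl fun m _ => ?_
          have hz : (∑ z : Fin k → F, ψ (t * ∑ i, z i ^ 2 + ∑ i, m i * z i))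
              = -(q : ℂ) ^ (k / 2) * ψ (-(∑ i, m i ^ 2) / (4 * t)) := by
            rw [prodcoord hF2 hψ ht m, gauss_pow hF2 hq hψ hk4 ht]
          have hp : ∑ p ∈ W ×ˢ W, ψ (-∑ i, m i * (p.1 i - p.2 i)) = Bc m * B m := by
            have hsplit : ∀ x y : Fin k → F,
                ψ (-∑ i, m i * (x i - y i)) = ψ (-∑ i, m i * x i) * ψ (∑ i, m i * y i) := by
              intro x y
              rw [← map_add_eq_mul]
              congr 1
              simp only [mul_sub]
              rw [Finset.sum_sub_distrib]
              ring
            calc ∑ p ∈ W ×ˢ W, ψ (-∑ i, m i * (p.1 i - p.2 i))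
                = ∑ x ∈ W, ∑ y ∈ W, ψ (-∑ i, m i * x i) * ψ (∑ i, m i * y i) := by
                  rw [Finset.sum_product]
                  exact Finset.sum_congr rfl fun x _ =>
                    Finset.sum_congr rfl fun y _ => hsplit x y
              _ = Bc m * B m := by rw [← Finset.sum_mul_sum]
          rw [hz, hp]
  -- Step D : sum over t ≠ 0
  have hD : (q : ℂ) ^ k * ∑ t ∈ (univ : Finset F).erase 0, S t
      = ∑ m : Fin k → F,
          (-(q : ℂ) ^ (k / 2) * (if (∑ i, m i ^ 2) = 0 then (q : ℂ) - 1 else -1))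
            * (Bc m * B m) := by
    rw [Finset.mul_sum, Finset.sum_congr rfl hC, Finset.sum_comm]
    refine Finset.sum_congr rfl fun m _ => ?_
    have : ∀ t ∈ (univ : Finset F).erase 0,
        -(q : ℂ) ^ (k / 2) * ψ (-(∑ i, m i ^ 2) / (4 * t)) * (Bc m * B m)
          = (ψ (-(∑ i, m i ^ 2) / (4 * t))) * (-(q : ℂ) ^ (k / 2) * (Bc m * B m)) := by
      intro t _; ring
    rw [Finset.sum_congr rfl this, ← Finset.sum_mul, T_sum hF2 hψ (∑ i, m i ^ 2)]
    ring
  -- Step E: positivity structure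
  have hE : ∀ m : Fin k → F, Bc m * B m = (Complex.normSq (B m) : ℂ) := by
    intro m
    have h1 : Bc m = (starRingEnd ℂ) (B m) := (conjB W m).symm
    rw [h1, mul_comm, Complex.mul_conj]
  -- split the t-sum
  have hsplit : ∑ t ∈ (univ : Finset F).erase 0, S t = (N : ℂ) * q - (W.card : ℂ) ^ 2 := by
    have := Finset.add_sum_erase univ S (Finset.mem_univ (0 : F))
    rw [hA, hB0] at this
    linear_combination this
  -- the real coefficient
  set r : (Fin k → F) → ℝ := fun m =>
    if (∑ i, m i ^ 2) = 0 then -((q : ℝ) ^ (k / 2) * ((q : ℝ) - 1)) else (q : ℝ) ^ (k / 2)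
    with hrdef
  have hcoef : ∀ m : Fin k → F,
      -(q : ℂ) ^ (k / 2) * (if (∑ i, m i ^ 2) = 0 then (q : ℂ) - 1 else -1)
        = ((r m : ℝ) : ℂ) := by
    intro m
    by_cases h : (∑ i, m i ^ 2) = 0 <;> simp only [hrdef, h, if_true, if_false] <;>
      push_cast <;> ring
  -- main real identity
  have hcomplex : ((q : ℂ) ^ k) * ((N : ℂ) * q - (W.card : ℂ) ^ 2)
      = ∑ m : Fin k → F, ((r m : ℝ) : ℂ) * (Complex.normSq (B m) : ℂ) := by
    rw [← hsplit, hD]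
    exact Finset.sum_congr rfl fun m _ => by rw [hcoef m, hE m]
  have hreal : (q : ℝ) ^ k * ((N : ℝ) * q - (W.card : ℝ) ^ 2)
      = ∑ m : Fin k → F, r m * Complex.normSq (B m) := by
    apply Complex.ofReal_injective
    push_cast
    convert hcomplex using 2
  -- Parseval
  have hparsC : ∑ m : Fin k → F, (Complex.normSq (B m) : ℂ) = (q : ℂ) ^ k * W.card := by
    rw [← Finset.sum_congr rfl fun m _ => hE m]
    rw [← Finset.sum_congr rfl fun m _ => (mul_comm (B m) (Bc m))]
    exact parseval hψ W
  have hpars : ∑ m : Fin k → F, Complex.normSq (B m) = (q : ℝ) ^ k * W.card := by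
    apply Complex.ofReal_injective
    push_cast
    convert hparsC using 2
  -- bound
  have hb : ∑ m : Fin k → F, r m * Complex.normSq (B m)
      ≤ (q : ℝ) ^ (k / 2) * ((q : ℝ) ^ k * W.card) := by
    rw [← hpars, Finset.mul_sum]
    refine Finset.sum_le_sum fun m _ => ?_
    refine mul_le_mul_of_nonneg_right ?_ (Complex.normSq_nonneg _)
    by_cases h : (∑ i, m i ^ 2) = 0 <;> simp only [hrdef, h, if_true, if_false]
    · have h1 : (0 : ℝ) < (q : ℝ) ^ (k / 2) := by positivity
      nlinarith
    · exact le_rfl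
  have hpk : (0 : ℝ) < (q : ℝ) ^ k := by positivity
  have hk1 : (N : ℝ) * q - (W.card : ℝ) ^ 2 ≤ (q : ℝ) ^ (k / 2) * W.card := by
    have h' : (q : ℝ) ^ k * ((N : ℝ) * q - (W.card : ℝ) ^ 2)
        ≤ (q : ℝ) ^ k * ((q : ℝ) ^ (k / 2) * W.card) := by
      rw [hreal]
      calc ∑ m : Fin k → F, r m * Complex.normSq (B m)
          ≤ (q : ℝ) ^ (k / 2) * ((q : ℝ) ^ k * W.card) := hb
        _ = (q : ℝ) ^ k * ((q : ℝ) ^ (k / 2) * W.card) := by ring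
    exact le_of_mul_le_mul_left h' hpk
  have hexp2 : (q : ℝ) ^ (k / 2) = (q : ℝ) ^ ((k - 2) / 2) * q := by
    have hdiv : k / 2 = (k - 2) / 2 + 1 := by omega
    rw [hdiv, pow_succ]
  have h2 : (N : ℝ) ≤ ((W.card : ℝ) ^ 2 + (q : ℝ) ^ ((k - 2) / 2) * W.card * q) / q := by
    rw [le_div_iff₀ hqpos]
    nlinarith [hk1, hexp2]
  calc (N : ℝ) ≤ ((W.card : ℝ) ^ 2 + (q : ℝ) ^ ((k - 2) / 2) * W.card * q) / q := h2
    _ = (W.card : ℝ) ^ 2 / q + (q : ℝ) ^ ((k - 2) / 2) * W.card := by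
      field_simp
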